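/- Let f be a non-degenerate integrable log-concave function on ℝⁿ and (f_m) a sequence of such functions converging to f in L¹. Then there exist t ∈ ℝ, ρ > 0, and m₀ such that for all m ≥ m₀ and all x ∈ ℝⁿ, f_m(x) ≤ exp(−‖x‖/ρ + t). -/

import Mathlib

open MeasureTheory Filter
noncomputable section

/-- `ℝⁿ` as a Euclidean space. -/
abbrev Euc (n : ℕ) := EuclideanSpace ℝ (Fin n)

/-- `f` is a non-degenerate, upper semicontinuous, integrable log-concave
function on `ℝⁿ` (the class `LC`): `f ≥ 0`, `f` is upper semicontinuous,
log-concave, integrable with `0 < ∫ f`, and the interior of its support is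
non-empty. -/
def IsLC {n : ℕ} (f : Euc n → ℝ) : Prop :=
  (∀ x, 0 ≤ f x) ∧ UpperSemicontinuous f ∧
  (∀ x y : Euc n, ∀ a b : ℝ, 0 ≤ a → 0 ≤ b → a + b = 1 →
      f x ^ a * f y ^ b ≤ f (a • x + b • y)) ∧
  Integrable f ∧ 0 < ∫ x, f x ∧ (interior (Function.support f)).Nonempty

/-!
Choose `C = closedBall 0 r ∩ {c ≤ f}` of positive measure. By `L¹` convergence, for large `m`
the function `F m` is `≥ c / 2` on a part `K ⊆ C` of measure `≥ κ > 0`, and `∫ F m ≤ ∫ f + 1`.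
Log-concavity gives `F m ≥ F m x ^ θ * (c / 2) ^ (1 - θ)` on the homothetic copy
`θ • x +ᵥ (1 - θ) • K`, whose volume is `≥ 2⁻ⁿ κ` when `θ ≤ 1 / 2`. With `θ = 1 / 2` this bounds
`F m` uniformly; and if `F m x ≥ c / 4` at a point far away, many disjoint such copies each carry
mass `≥ (c / 4) 2⁻ⁿ κ`, contradicting the bound on `∫ F m`. So `F m ≤ c / 4` outside a fixed ball,
and log-concavity along the segment from a point of `K` to `x` turns this into geometric decay.
-/

open Set Metric Pointwise
open scoped ENNReal

def LogConcave {E : Type*} [AddCommGroup E] [Module ℝ E] (g : E → ℝ) : Prop :=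
  ∀ x y : E, ∀ a b : ℝ, 0 ≤ a → 0 ≤ b → a + b = 1 → g x ^ a * g y ^ b ≤ g (a • x + b • y)

theorem exists_measure_closedBall_inter_superlevel_pos {E : Type*} [SeminormedAddCommGroup E]
    [MeasurableSpace E] {μ : Measure E} {f : E → ℝ} (hf0 : ∀ x, 0 ≤ f x)
    (hsupp : 0 < μ (Function.support f)) :
    ∃ c > 0, ∃ r ≥ 0, 0 < μ (closedBall (0 : E) r ∩ {y | c ≤ f y}) := by
  have hcover : Function.support f ⊆
      ⋃ k : ℕ, closedBall (0 : E) k ∩ {y | ((k : ℝ) + 1)⁻¹ ≤ f y} := by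
    intro y hy
    have hfy : 0 < f y := (hf0 y).lt_of_ne (Ne.symm hy)
    obtain ⟨k, hk⟩ := exists_nat_ge (max ‖y‖ (f y)⁻¹)
    refine mem_iUnion.mpr ⟨k, mem_closedBall_zero_iff.mpr (le_of_max_le_left hk), ?_⟩
    rw [Set.mem_ofPred_eq, inv_le_comm₀ (by positivity) hfy]
    linarith [le_of_max_le_right hk]
  obtain ⟨k, hk⟩ := exists_measure_pos_of_not_measure_iUnion_null
    (hsupp.trans_le (measure_mono hcover)).ne'
  exact ⟨_, by positivity, _, Nat.cast_nonneg k, hk⟩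

theorem measureReal_sub_le_measureReal_inter_superlevel {α : Type*} [MeasurableSpace α]
    {μ : Measure α} {F f : α → ℝ} (hF : Integrable F μ) (hf : Integrable f μ) {C : Set α}
    (hC : μ C ≠ ∞) {c ε : ℝ} (hεc : ε < c) (hfC : ∀ y ∈ C, c ≤ f y) :
    μ.real C - (∫ y, |F y - f y| ∂μ) / (c - ε) ≤ μ.real (C ∩ {y | ε ≤ F y}) := by
  have hδ : 0 < c - ε := sub_pos.mpr hεc
  set bad := {y | c - ε ≤ |F y - f y|}
  have hcover : C ⊆ (C ∩ {y | ε ≤ F y}) ∪ (C ∩ bad) := by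
    intro y hy
    by_cases h : ε ≤ F y
    · exact Or.inl ⟨hy, h⟩
    · refine Or.inr ⟨hy, ?_⟩
      rw [Set.mem_ofPred_eq, abs_sub_comm]
      exact le_abs.mpr (Or.inl (by linarith [hfC y hy]))
  have hmarkov : (c - ε) * μ.real bad ≤ ∫ y, |F y - f y| ∂μ :=
    mul_meas_ge_le_integral_of_nonneg (ae_of_all _ fun _ => abs_nonneg _) (hF.sub hf).abs _
  have hbad : μ bad ≠ ∞ := ((hF.sub hf).abs.measure_ge_lt_top hδ).ne
  have hunion : μ ((C ∩ {y | ε ≤ F y}) ∪ (C ∩ bad)) ≠ ∞ :=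
    measure_ne_top_of_subset (union_subset inter_subset_left inter_subset_left) hC
  have hle : μ.real C ≤ μ.real (C ∩ {y | ε ≤ F y}) + μ.real bad :=
    calc μ.real C ≤ μ.real ((C ∩ {y | ε ≤ F y}) ∪ (C ∩ bad)) := measureReal_mono hcover hunion
      _ ≤ μ.real (C ∩ {y | ε ≤ F y}) + μ.real (C ∩ bad) := measureReal_union_le _ _
      _ ≤ μ.real (C ∩ {y | ε ≤ F y}) + μ.real bad :=
        add_le_add le_rfl (measureReal_mono inter_subset_right hbad)
  have hbad_le : μ.real bad ≤ (∫ y, |F y - f y| ∂μ) / (c - ε) := by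
    rw [le_div_iff₀ hδ]
    linarith
  linarith

theorem card_mul_le_integral_of_pairwiseDisjoint {α ι : Type*} [MeasurableSpace α]
    {μ : Measure α} {g : α → ℝ} (hg0 : 0 ≤ᵐ[μ] g) (hint : Integrable g μ) (s : Finset ι)
    {S : ι → Set α} (hSm : ∀ i ∈ s, MeasurableSet (S i)) (hdisj : (s : Set ι).PairwiseDisjoint S)
    {c : ℝ} (hc : ∀ i ∈ s, c ≤ ∫ y in S i, g y ∂μ) :
    s.card * c ≤ ∫ y, g y ∂μ :=
  calc s.card * c = ∑ _i ∈ s, c := by rw [Finset.sum_const, nsmul_eq_mul]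
    _ ≤ ∑ i ∈ s, ∫ y in S i, g y ∂μ := Finset.sum_le_sum hc
    _ = ∫ y in ⋃ i ∈ s, S i, g y ∂μ :=
      (integral_biUnion_finset s hSm hdisj fun _ _ => hint.integrableOn).symm
    _ ≤ ∫ y, g y ∂μ := setIntegral_le_integral hint hg0

section InnerProductSpace

variable {E : Type*} [NormedAddCommGroup E] [InnerProductSpace ℝ E]

theorem abs_inner_sub_le_of_mem_homothety {K : Set E} {r θ : ℝ} (hK : K ⊆ closedBall 0 r)
    (hθ0 : 0 ≤ θ) (hθ1 : θ ≤ 1) {x y : E} (hy : y ∈ θ • x +ᵥ (1 - θ) • K) :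
    |inner ℝ x y - θ * ‖x‖ ^ 2| ≤ r * ‖x‖ := by
  obtain ⟨_, ⟨u, hu, rfl⟩, rfl⟩ := hy
  have hur : ‖u‖ ≤ r := mem_closedBall_zero_iff.mp (hK hu)
  have hsplit : inner ℝ x (θ • x +ᵥ (1 - θ) • u) - θ * ‖x‖ ^ 2 = (1 - θ) * inner ℝ x u := by
    rw [vadd_eq_add, inner_add_right, real_inner_smul_right, real_inner_smul_right,
      real_inner_self_eq_norm_sq]
    ring
  beta_reduce
  rw [hsplit, abs_mul, abs_of_nonneg (by linarith)]
  calc (1 - θ) * |inner ℝ x u| ≤ 1 * (‖x‖ * ‖u‖) :=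
        mul_le_mul (by linarith) (abs_real_inner_le_norm x u) (abs_nonneg _) zero_le_one
    _ ≤ r * ‖x‖ := by
      rw [one_mul, mul_comm]
      gcongr

theorem disjoint_homothety {K : Set E} {r θ θ' : ℝ} (hK : K ⊆ closedBall 0 r)
    (hθ0 : 0 ≤ θ) (hθ1 : θ ≤ 1) (hθ0' : 0 ≤ θ') (hθ1' : θ' ≤ 1) {x : E}
    (hsep : 2 * r * ‖x‖ < |θ - θ'| * ‖x‖ ^ 2) :
    Disjoint (θ • x +ᵥ (1 - θ) • K) (θ' • x +ᵥ (1 - θ') • K) := by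
  rw [Set.disjoint_left]
  intro y hy hy'
  have h := abs_inner_sub_le_of_mem_homothety hK hθ0 hθ1 hy
  have h' := abs_inner_sub_le_of_mem_homothety hK hθ0' hθ1' hy'
  have hdiff : |θ - θ'| * ‖x‖ ^ 2 = |θ * ‖x‖ ^ 2 - θ' * ‖x‖ ^ 2| := by
    rw [← sub_mul, abs_mul, abs_of_nonneg (sq_nonneg ‖x‖)]
  rw [abs_sub_comm] at h
  linarith [abs_sub_le (θ * ‖x‖ ^ 2) (inner ℝ x y) (θ' * ‖x‖ ^ 2)]

end InnerProductSpace

namespace LogConcave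

theorem rpow_mul_rpow_le {E : Type*} [AddCommGroup E] [Module ℝ E] {g : E → ℝ}
    (hg : LogConcave g) (hg0 : ∀ x, 0 ≤ g x) {u : E} {ε θ : ℝ} (hε : 0 ≤ ε) (hgu : ε ≤ g u)
    (hθ0 : 0 ≤ θ) (hθ1 : θ ≤ 1) (x : E) :
    g x ^ θ * ε ^ (1 - θ) ≤ g (θ • x + (1 - θ) • u) :=
  calc g x ^ θ * ε ^ (1 - θ) ≤ g x ^ θ * g u ^ (1 - θ) :=
        mul_le_mul_of_nonneg_left (Real.rpow_le_rpow hε hgu (by linarith))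
          (Real.rpow_nonneg (hg0 x) θ)
    _ ≤ g (θ • x + (1 - θ) • u) := hg x u θ (1 - θ) hθ0 (by linarith) (by ring)

section NormedSpace

variable {E : Type*} [NormedAddCommGroup E] [NormedSpace ℝ E] {g : E → ℝ}

theorem le_mul_two_rpow_of_far (hg : LogConcave g) (hg0 : ∀ x, 0 ≤ g x) {u : E} {ε R L : ℝ}
    (hε : 0 < ε) (hgu : ε ≤ g u) (hfar : ∀ y, R ≤ ‖y‖ → g y ≤ ε / 2) (hL : 0 < L)
    (hRL : R + ‖u‖ ≤ L) {x : E} (hx : L ≤ ‖x - u‖) :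
    g x ≤ ε * 2 ^ (-(‖x - u‖ / L)) := by
  set T := ‖x - u‖
  have hT : 0 < T := hL.trans_le hx
  set a := L / T
  have ha0 : 0 < a := by positivity
  have ha1 : a ≤ 1 := div_le_one_of_le₀ hx hT.le
  -- the point at distance `L` from `u` towards `x` lies where `g ≤ ε / 2`
  have hw : R ≤ ‖a • x + (1 - a) • u‖ := by
    have hnorm : ‖a • (x - u)‖ = L := by
      rw [norm_smul, Real.norm_of_nonneg ha0.le, div_mul_cancel₀ _ hT.ne']
    have htri := norm_sub_le (a • (x - u) + u) u
    rw [add_sub_cancel_right, hnorm] at htri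
    rw [show a • x + (1 - a) • u = a • (x - u) + u by module]
    linarith
  have hkey : g x ^ a * ε ^ (1 - a) ≤ ε ^ a * ε ^ (1 - a) / 2 := by
    rw [← Real.rpow_add hε, add_sub_cancel, Real.rpow_one]
    exact (hg.rpow_mul_rpow_le hg0 hε.le hgu ha0.le ha1 x).trans (hfar _ hw)
  have hpow : g x ^ a ≤ (ε * 2 ^ (-(T / L))) ^ a := by
    rw [Real.mul_rpow hε.le (by positivity), ← Real.rpow_mul zero_le_two,
      show -(T / L) * (L / T) = -1 by field_simp, Real.rpow_neg_one]
    have := Real.rpow_pos_of_pos hε (1 - a)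
    nlinarith
  exact (Real.rpow_le_rpow_iff (hg0 x) (by positivity) ha0).mp hpow

theorem le_mul_two_rpow (hg : LogConcave g) (hg0 : ∀ x, 0 ≤ g x) {u : E} {ε M R L r : ℝ}
    (hε : 0 < ε) (hgu : ε ≤ g u) (hu : ‖u‖ ≤ r) (hM : ∀ y, g y ≤ M)
    (hfar : ∀ y, R ≤ ‖y‖ → g y ≤ ε / 2) (hL : 0 < L) (hRL : R + r ≤ L) (x : E) :
    g x ≤ M * 2 ^ ((L + r - ‖x‖) / L) := by
  rcases le_or_gt ‖x‖ (L + r) with hx | hx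
  · calc g x ≤ M := hM x
      _ ≤ M * 2 ^ ((L + r - ‖x‖) / L) :=
        le_mul_of_one_le_right ((hg0 x).trans (hM x))
          (Real.one_le_rpow one_le_two (div_nonneg (by linarith) hL.le))
  · have hxu : ‖x‖ - r ≤ ‖x - u‖ := by linarith [norm_sub_norm_le x u]
    calc g x ≤ ε * 2 ^ (-(‖x - u‖ / L)) :=
          hg.le_mul_two_rpow_of_far hg0 hε hgu hfar hL (by linarith) (by linarith)
      _ ≤ M * 2 ^ ((L + r - ‖x‖) / L) := by
        have hexp : -(‖x - u‖ / L) ≤ (L + r - ‖x‖) / L := by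
          rw [← neg_div]
          exact div_le_div_of_nonneg_right (by linarith) hL.le
        exact mul_le_mul (hgu.trans (hM u)) (Real.rpow_le_rpow_of_exponent_le one_le_two hexp)
          (by positivity) ((hg0 x).trans (hM x))

end NormedSpace

section AddHaar

variable {E : Type*} [NormedAddCommGroup E] [NormedSpace ℝ E] [FiniteDimensional ℝ E]
  [MeasurableSpace E] [BorelSpace E] {μ : Measure E} [μ.IsAddHaarMeasure] {g : E → ℝ}

theorem mul_le_setIntegral_homothety (hg : LogConcave g) (hg0 : ∀ x, 0 ≤ g x)
    (hint : Integrable g μ) {K : Set E} (hKm : MeasurableSet K) (hKfin : μ K ≠ ∞) {ε κ θ : ℝ}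
    (hε : 0 ≤ ε) (hKg : ∀ u ∈ K, ε ≤ g u) (hκK : κ ≤ μ.real K) (hθ0 : 0 ≤ θ) (hθ1 : θ ≤ 1 / 2)
    (x : E) :
    g x ^ θ * ε ^ (1 - θ) * (2⁻¹ ^ Module.finrank ℝ E * κ) ≤
      ∫ y in θ • x +ᵥ (1 - θ) • K, g y ∂μ := by
  have h1θ : 0 < 1 - θ := by linarith
  set S := θ • x +ᵥ (1 - θ) • K
  have hS : μ S = ENNReal.ofReal ((1 - θ) ^ Module.finrank ℝ E) * μ K := by
    rw [measure_vadd, Measure.addHaar_smul_of_nonneg μ h1θ.le]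
  have hSfin : μ S ≠ ∞ := by
    rw [hS]
    exact ENNReal.mul_ne_top ENNReal.ofReal_ne_top hKfin
  have hSm : MeasurableSet S := (hKm.const_smul_of_ne_zero h1θ.ne').const_vadd _
  have hvol : 2⁻¹ ^ Module.finrank ℝ E * κ ≤ μ.real S := by
    rw [measureReal_def, hS, ENNReal.toReal_mul, ENNReal.toReal_ofReal (by positivity),
      ← measureReal_def]
    calc 2⁻¹ ^ Module.finrank ℝ E * κ ≤ 2⁻¹ ^ Module.finrank ℝ E * μ.real K := by gcongr
      _ ≤ (1 - θ) ^ Module.finrank ℝ E * μ.real K := by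
        gcongr
        linarith
  have hlow : ∀ y ∈ S, g x ^ θ * ε ^ (1 - θ) ≤ g y := by
    rintro _ ⟨_, ⟨u, hu, rfl⟩, rfl⟩
    exact hg.rpow_mul_rpow_le hg0 hε (hKg u hu) hθ0 (by linarith) x
  calc g x ^ θ * ε ^ (1 - θ) * (2⁻¹ ^ Module.finrank ℝ E * κ)
      ≤ g x ^ θ * ε ^ (1 - θ) * μ.real S :=
        mul_le_mul_of_nonneg_left hvol (mul_nonneg (Real.rpow_nonneg (hg0 x) θ) (by positivity))
    _ ≤ ∫ y in S, g y ∂μ := setIntegral_ge_of_const_le_real hSm hSfin hlow hint.integrableOn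

theorem le_of_integral_le (hg : LogConcave g) (hg0 : ∀ x, 0 ≤ g x) (hint : Integrable g μ)
    {K : Set E} (hKm : MeasurableSet K) (hKfin : μ K ≠ ∞) {ε κ A : ℝ} (hε : 0 < ε) (hκ : 0 < κ)
    (hKg : ∀ u ∈ K, ε ≤ g u) (hκK : κ ≤ μ.real K) (hA : ∫ y, g y ∂μ ≤ A) (x : E) :
    g x ≤ (A / (2⁻¹ ^ Module.finrank ℝ E * κ)) ^ 2 / ε := by
  have hc : 0 < 2⁻¹ ^ Module.finrank ℝ E * κ := by positivity
  have hhalf := hg.mul_le_setIntegral_homothety hg0 hint hKm hKfin hε.le hKg hκK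
    (θ := 1 / 2) (by norm_num) le_rfl x
  rw [show (1 : ℝ) - 1 / 2 = 1 / 2 by norm_num, ← Real.mul_rpow (hg0 x) hε.le,
    ← Real.sqrt_eq_rpow] at hhalf
  have hsqrt : √(g x * ε) ≤ A / (2⁻¹ ^ Module.finrank ℝ E * κ) := by
    rw [le_div_iff₀ hc]
    exact hhalf.trans ((setIntegral_le_integral hint (ae_of_all _ hg0)).trans hA)
  rw [le_div_iff₀ hε, ← Real.sq_sqrt (mul_nonneg (hg0 x) hε.le)]
  exact pow_le_pow_left₀ (Real.sqrt_nonneg _) hsqrt 2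

end AddHaar

section InnerProductSpace

variable {E : Type*} [NormedAddCommGroup E] [InnerProductSpace ℝ E] [FiniteDimensional ℝ E]
  [MeasurableSpace E] [BorelSpace E] {μ : Measure E} [μ.IsAddHaarMeasure] {g : E → ℝ}

theorem lt_half_of_far (hg : LogConcave g) (hg0 : ∀ x, 0 ≤ g x) (hint : Integrable g μ)
    {K : Set E} {r ε κ A : ℝ} (hKm : MeasurableSet K) (hKr : K ⊆ closedBall 0 r) (hr : 0 ≤ r)
    (hε : 0 < ε) (hκ : 0 ≤ κ) (hKg : ∀ u ∈ K, ε ≤ g u) (hκK : κ ≤ μ.real K)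
    (hA : ∫ y, g y ∂μ ≤ A) {N : ℕ} (hN : A < N * (ε / 2 * (2⁻¹ ^ Module.finrank ℝ E * κ)))
    {x : E} (hx : 2 * N * (2 * r + 1) ≤ ‖x‖) :
    g x < ε / 2 := by
  by_contra! hgx
  have hKfin : μ K ≠ ∞ := measure_ne_top_of_subset hKr measure_closedBall_lt_top.ne
  have hN0 : 0 < N := Nat.pos_of_ne_zero fun hN0 => by
    subst hN0
    linarith [(integral_nonneg hg0).trans hA]
  have hx0 : 0 < ‖x‖ := lt_of_lt_of_le (by positivity) hx
  -- the step `(2 r + 1) / ‖x‖` beats the width `2 r` of `K` in the direction of `x`,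
  -- so the copies `θ j • x +ᵥ (1 - θ j) • K` are disjoint
  set θ : ℕ → ℝ := fun j => j * (2 * r + 1) / ‖x‖
  have hθ0 : ∀ j, 0 ≤ θ j := fun j => by positivity
  have hθ1 : ∀ j < N, θ j ≤ 1 / 2 := by
    intro j hj
    have : (j : ℝ) + 1 ≤ N := by exact_mod_cast hj
    rw [div_le_iff₀ hx0]
    nlinarith
  have hslab : ∀ j ∈ Finset.range N, ε / 2 * (2⁻¹ ^ Module.finrank ℝ E * κ) ≤
      ∫ y in θ j • x +ᵥ (1 - θ j) • K, g y ∂μ := by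
    intro j hj
    have hj := hθ1 j (Finset.mem_range.mp hj)
    refine le_trans (mul_le_mul_of_nonneg_right ?_ (by positivity))
      (hg.mul_le_setIntegral_homothety hg0 hint hKm hKfin hε.le hKg hκK (hθ0 j) hj x)
    calc ε / 2 = (ε / 2) ^ θ j * (ε / 2) ^ (1 - θ j) := by
          rw [← Real.rpow_add (by positivity), add_sub_cancel, Real.rpow_one]
      _ ≤ g x ^ θ j * ε ^ (1 - θ j) :=
        mul_le_mul (Real.rpow_le_rpow (by positivity) hgx (hθ0 j))
          (Real.rpow_le_rpow (by positivity) (by linarith) (by linarith)) (by positivity)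
          (Real.rpow_nonneg (hg0 x) _)
  have hdisj : ((Finset.range N : Finset ℕ) : Set ℕ).PairwiseDisjoint
      fun j => θ j • x +ᵥ (1 - θ j) • K := by
    intro i hi j hj hij
    simp only [Finset.coe_range, mem_Iio] at hi hj
    apply disjoint_homothety hKr (hθ0 i) (by linarith [hθ1 i hi]) (hθ0 j) (by linarith [hθ1 j hj])
    have hij' : (1 : ℝ) ≤ |(i : ℝ) - j| := by
      exact_mod_cast Int.one_le_abs (sub_ne_zero.mpr (Nat.cast_injective.ne hij) : (i : ℤ) - j ≠ 0)
    have hstep : |θ i - θ j| * ‖x‖ ^ 2 = |(i : ℝ) - j| * ((2 * r + 1) * ‖x‖) := by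
      rw [show θ i - θ j = ((i : ℝ) - j) * ((2 * r + 1) / ‖x‖) by simp only [θ]; ring, abs_mul,
        abs_of_pos (by positivity : 0 < (2 * r + 1) / ‖x‖)]
      field_simp
    rw [hstep]
    linarith [le_mul_of_one_le_left (by positivity : 0 ≤ (2 * r + 1) * ‖x‖) hij']
  have hsum := card_mul_le_integral_of_pairwiseDisjoint (ae_of_all _ hg0) hint (Finset.range N)
    (fun j hj => (hKm.const_smul_of_ne_zero
      (sub_pos.mpr (by linarith [hθ1 j (Finset.mem_range.mp hj)])).ne').const_vadd _) hdisj hslab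
  rw [Finset.card_range] at hsum
  linarith

end InnerProductSpace

end LogConcave

theorem exists_exp_bound_of_logConcave {E : Type*} [NormedAddCommGroup E] [InnerProductSpace ℝ E]
    [FiniteDimensional ℝ E] [MeasurableSpace E] [BorelSpace E] (μ : Measure E)
    [μ.IsAddHaarMeasure] {r ε κ A : ℝ} (hr : 0 ≤ r) (hε : 0 < ε) (hκ : 0 < κ) :
    ∃ t ρ : ℝ, 0 < ρ ∧ ∀ (g : E → ℝ) (K : Set E), (∀ x, 0 ≤ g x) → LogConcave g →
      Integrable g μ → MeasurableSet K → K ⊆ closedBall 0 r → (∀ u ∈ K, ε ≤ g u) →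
      κ ≤ μ.real K → ∫ y, g y ∂μ ≤ A → ∀ x, g x ≤ Real.exp (-‖x‖ / ρ + t) := by
  set c := 2⁻¹ ^ Module.finrank ℝ E * κ
  obtain ⟨N, hN⟩ := exists_nat_gt (A / (ε / 2 * c))
  rw [div_lt_iff₀ (by positivity)] at hN
  set R := 2 * N * (2 * r + 1)
  set L := R + r + 1
  have hL : 0 < L := by positivity
  set M := (A / c) ^ 2 / ε
  set ρ := L / Real.log 2
  refine ⟨Real.log M + (L + r) / ρ, ρ, by positivity, ?_⟩
  intro g K hg0 hg hint hKm hKr hKg hκK hA x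
  have hKfin : μ K ≠ ∞ := measure_ne_top_of_subset hKr measure_closedBall_lt_top.ne
  obtain ⟨u, hu⟩ : K.Nonempty :=
    nonempty_of_measure_ne_zero (ENNReal.toReal_pos_iff.mp (hκ.trans_le hκK)).1.ne'
  have hM : ∀ y, g y ≤ M := hg.le_of_integral_le hg0 hint hKm hKfin hε hκ hKg hκK hA
  have hfar : ∀ y, R ≤ ‖y‖ → g y ≤ ε / 2 := fun y hy =>
    (hg.lt_half_of_far hg0 hint hKm hKr hr hε hκ.le hKg hκK hA hN hy).le
  have hMpos : 0 < M := hε.trans_le ((hKg u hu).trans (hM u))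
  calc g x ≤ M * 2 ^ ((L + r - ‖x‖) / L) :=
        hg.le_mul_two_rpow hg0 hε (hKg u hu) (mem_closedBall_zero_iff.mp (hKr hu)) hM hfar hL
          (by linarith) x
    _ = Real.exp (-‖x‖ / ρ + (Real.log M + (L + r) / ρ)) := by
      rw [Real.rpow_def_of_pos two_pos, ← Real.exp_log hMpos, ← Real.exp_add, Real.exp_log hMpos]
      congr 1
      simp only [ρ]
      field_simp
      ring

theorem uniform_exponential_bound (n : ℕ) (F : ℕ → Euc n → ℝ) (f : Euc n → ℝ)
    (hF : ∀ m, IsLC (F m)) (hf : IsLC f)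
    (hL1 : Tendsto (fun m => ∫ x, |F m x - f x|) atTop (nhds 0)) :
    ∃ t ρ : ℝ, 0 < ρ ∧ ∃ m₀ : ℕ, ∀ m ≥ m₀, ∀ x : Euc n,
      F m x ≤ Real.exp (-‖x‖ / ρ + t) := by
  obtain ⟨hf0, hfusc, -, hfint, hfpos, -⟩ := hf
  obtain ⟨c, hc, r, hr, hC⟩ := exists_measure_closedBall_inter_superlevel_pos hf0
    ((integral_pos_iff_support_of_nonneg hf0 hfint).mp hfpos)
  set C := closedBall (0 : Euc n) r ∩ {y | c ≤ f y}
  have hCfin : volume C ≠ ∞ :=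
    measure_ne_top_of_subset inter_subset_left measure_closedBall_lt_top.ne
  set κ := volume.real C / 2 with hκC
  have hκ : 0 < κ := half_pos (ENNReal.toReal_pos hC.ne' hCfin)
  obtain ⟨t, ρ, hρ, hbound⟩ := exists_exp_bound_of_logConcave (volume : Measure (Euc n)) hr
    (half_pos hc) hκ (A := (∫ x, f x) + 1)
  obtain ⟨m₀, hm₀⟩ := eventually_atTop.mp
    (hL1.eventually (gt_mem_nhds (lt_min one_pos (mul_pos (half_pos hc) hκ))))
  refine ⟨t, ρ, hρ, m₀, fun m hm => ?_⟩
  obtain ⟨hg0, hgusc, hglc, hgint, -⟩ := hF m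
  have hclose := hm₀ m hm
  refine hbound (F m) (C ∩ {y | c / 2 ≤ F m y}) hg0 hglc hgint ?_
    (inter_subset_left.trans inter_subset_left) (fun u hu => hu.2) ?_ ?_
  · exact (measurableSet_closedBall.inter (hfusc.measurable measurableSet_Ici)).inter
      (hgusc.measurable measurableSet_Ici)
  · have hlow := measureReal_sub_le_measureReal_inter_superlevel hgint hfint hCfin
      (half_lt_self hc) fun y hy => hy.2
    have hsmall : (∫ x, |F m x - f x|) / (c - c / 2) ≤ κ := by
      rw [div_le_iff₀ (by linarith)]
      linarith [min_le_right 1 (c / 2 * κ)]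
    linarith
  · have hdiff : (∫ x, F m x) - ∫ x, f x ≤ ∫ x, |F m x - f x| := by
      rw [← integral_sub hgint hfint]
      exact integral_mono (hgint.sub hfint) (hgint.sub hfint).abs fun x => le_abs_self _
    linarith [min_le_left 1 (c / 2 * κ)]
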